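/- arXiv:2409.15676 — 2 statements merged into one kernel-verified Lean document; each statement's English description precedes it below -/
import Mathlib

section
/- Let Z₁,…,Z_n be independent real random variables such that for each k ∈ [K*+1] the variables {Z_i : τ*_{k−1} < i ≤ τ*_k} are iid with an atomless (continuous) distribution, where 0 = τ*₀ < τ*₁ < ⋯ < τ*_{K*} < τ*_{K*+1} = n are changepoints and h is a window size with 2h ≤ n. For h ≤ τ ≤ n−h define the two-sample Wilcoxon/Mann–Whitney statistic T_{τ,WMW} = Σ_{i=τ+1}^{τ+h} R_{τ,i}, where R_{τ,i} = Σ_{j=τ−h+1}^{τ+h} 1{Z_j ≤ Z_i}. Let ξ₁,…,ξ_n be iid standard normal random variables and let T_{τ,simul} be the same statistic computed from ξ₁,…,ξ_n; set t_{u,α} = inf{t : P(max_{h≤τ≤n−h} T_{τ,simul} > t) ≤ α} for α ∈ (0,1). Then for every random subset 𝒯̂ of {1,…,n−1} with measurable membership events, P(there exists τ ∈ 𝒯̂ ∩ H with T_{τ,WMW} > t_{u,α}) ≤ α, where H = {τ ∈ {h,…,n−h} : the open interval (τ−h, τ+h) contains none of τ*₁,…,τ*_{K*}}. -/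
open MeasureTheory ProbabilityTheory Filter

/-- The windowed two-sample Wilcoxon/Mann–Whitney statistic
`T_{τ,WMW} = Σ_{i=τ+1}^{τ+h} R_{τ,i}` with `R_{τ,i} = Σ_{j=τ−h+1}^{τ+h} 1{Z_j ≤ Z_i}`. -/
noncomputable def wmwStat {Ω : Type*} (h : ℕ) (Z : ℕ → Ω → ℝ) (τ : ℕ) (ω : Ω) : ℝ :=
  ∑ i ∈ Finset.Ioc τ (τ + h), ∑ j ∈ Finset.Ioc (τ - h) (τ + h),
    (if Z j ω ≤ Z i ω then (1 : ℝ) else 0)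

/-!
On a window free of changepoints the observations share one continuous cdf `F`; since `F` is
monotone, replacing each `Z_j` by `F(Z_j)` can only increase the statistic. By the probability
integral transform, `(F_j(Z_j))_{j ≤ n}` (with `F_j` the cdf of `Z_j`) has the same joint law as
`(Φ(ξ_j))_{j ≤ n}`, independent uniforms in both cases, and `Φ` is strictly increasing, so
`Φ(ξ)` has exactly the statistics of `ξ`. Hence the FWER is at most
`P(max_τ T_{τ,simul} > t_{u,α})`, which is at most `α` because
`t ↦ P(max_τ T_{τ,simul} > t)` is right-continuous.
-/

open Set

namespace ProbabilityTheory

variable {μ : Measure ℝ} [IsProbabilityMeasure μ]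

lemma continuous_cdf [NullSingletonClass μ] : Continuous (cdf μ) := by
  refine continuous_iff_continuousAt.2 fun x => ?_
  rw [(monotone_cdf μ).continuousAt_iff_leftLim_eq_rightLim, (cdf μ).rightLim_eq]
  have hx := (cdf μ).measure_singleton x
  rw [measure_cdf, measure_singleton, eq_comm, ENNReal.ofReal_eq_zero, sub_nonpos] at hx
  exact le_antisymm ((monotone_cdf μ).leftLim_le le_rfl) hx

lemma measure_cdf_le_of_lt_one [NullSingletonClass μ] {c : ℝ} (hc : c < 1) :
    μ {x | cdf μ x ≤ c} = ENNReal.ofReal c := by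
  set A := {x | cdf μ x ≤ c}
  rcases A.eq_empty_or_nonempty with hA | hA
  · have hc0 : c ≤ 0 := by
      by_contra! hc0
      obtain ⟨x, hx⟩ := ((tendsto_cdf_atBot μ).eventually_lt_const hc0).exists
      exact hA.subset (show x ∈ A from hx.le)
    rw [hA, measure_empty, ENNReal.ofReal_of_nonpos hc0]
  obtain ⟨b, hb⟩ := ((tendsto_cdf_atTop μ).eventually_const_lt hc).exists
  have hAb : ∀ x ∈ A, x ≤ b := fun x hx =>
    le_of_not_gt fun hbx => (hb.trans_le ((monotone_cdf μ) hbx.le)).not_ge hx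
  set t := sSup A
  have ht : t ∈ A := (isClosed_le continuous_cdf continuous_const).csSup_mem hA ⟨b, hAb⟩
  have hA_eq : A = Iic t :=
    Subset.antisymm (fun x hx => le_csSup ⟨b, hAb⟩ hx)
      (fun x hx => (monotone_cdf μ hx).trans ht)
  -- the intermediate value theorem on `[t, b]` shows that `c` is attained at `t`
  obtain ⟨s, hs, hsc⟩ := intermediate_value_Icc (hAb t ht) continuous_cdf.continuousOn
    ⟨ht, hb.le⟩
  have hst : s = t := le_antisymm (le_csSup ⟨b, hAb⟩ (show s ∈ A from hsc.le)) hs.1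
  rw [hA_eq, ← ofReal_cdf, ← hst, hsc]

lemma map_cdf_eq_map_cdf (ν : Measure ℝ) [IsProbabilityMeasure ν]
    [NullSingletonClass μ] [NullSingletonClass ν] :
    μ.map (cdf μ) = ν.map (cdf ν) := by
  have : IsProbabilityMeasure (μ.map (cdf μ)) :=
    Measure.isProbabilityMeasure_map (monotone_cdf μ).measurable.aemeasurable
  refine Measure.ext_of_Iic _ _ fun c => ?_
  rw [Measure.map_apply (monotone_cdf μ).measurable measurableSet_Iic,
    Measure.map_apply (monotone_cdf ν).measurable measurableSet_Iic]
  rcases lt_or_ge c 1 with hc | hc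
  · exact (measure_cdf_le_of_lt_one hc).trans (measure_cdf_le_of_lt_one hc).symm
  · have hpre : ∀ (ρ : Measure ℝ) [IsProbabilityMeasure ρ], cdf ρ ⁻¹' Iic c = univ :=
      fun ρ _ => eq_univ_of_forall fun x => (cdf_le_one ρ x).trans hc
    rw [hpre, hpre, measure_univ, measure_univ]

lemma strictMono_cdf_of_absolutelyContinuous (h : volume ≪ μ) : StrictMono (cdf μ) := by
  intro a b hab
  have hpos : μ (Ioc a b) ≠ 0 := fun h0 => hab.not_ge (by simpa using h h0)
  rw [← measure_cdf μ, StieltjesFunction.measure_Ioc, Ne, ENNReal.ofReal_eq_zero,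
    not_le, sub_pos] at hpos
  exact hpos

lemma identDistrib_cdf_comp {Ω Ω' : Type*} {_ : MeasurableSpace Ω} {_ : MeasurableSpace Ω'}
    {P : Measure Ω} {P' : Measure Ω'} [IsProbabilityMeasure P] [IsProbabilityMeasure P']
    {X : Ω → ℝ} {X' : Ω' → ℝ} (hX : Measurable X) (hX' : Measurable X')
    [NullSingletonClass (P.map X)] [NullSingletonClass (P'.map X')] :
    IdentDistrib (fun ω => cdf (P.map X) (X ω)) (fun ω => cdf (P'.map X') (X' ω)) P P' := by
  have := Measure.isProbabilityMeasure_map (μ := P) hX.aemeasurable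
  have := Measure.isProbabilityMeasure_map (μ := P') hX'.aemeasurable
  refine ⟨((monotone_cdf _).measurable.comp hX).aemeasurable,
    ((monotone_cdf _).measurable.comp hX').aemeasurable, ?_⟩
  rw [← Function.comp_def, ← Function.comp_def, ← Measure.map_map (monotone_cdf _).measurable hX,
    ← Measure.map_map (monotone_cdf _).measurable hX', map_cdf_eq_map_cdf (P'.map X')]

lemma identDistrib_pi_cdf_comp {ι Ω Ω' : Type*} [Countable ι] {_ : MeasurableSpace Ω}
    {_ : MeasurableSpace Ω'} {P : Measure Ω} {P' : Measure Ω'} [IsProbabilityMeasure P]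
    [IsProbabilityMeasure P'] {X : ι → Ω → ℝ} {X' : ι → Ω' → ℝ}
    (hX : ∀ i, Measurable (X i)) (hX' : ∀ i, Measurable (X' i))
    (hXind : iIndepFun X P) (hX'ind : iIndepFun X' P')
    [∀ i, NullSingletonClass (P.map (X i))] [∀ i, NullSingletonClass (P'.map (X' i))] :
    IdentDistrib (fun ω i => cdf (P.map (X i)) (X i ω))
      (fun ω i => cdf (P'.map (X' i)) (X' i ω)) P P' :=
  IdentDistrib.pi (fun i => identDistrib_cdf_comp (hX i) (hX' i))
    (hXind.comp _ fun _ => (monotone_cdf _).measurable)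
    (hX'ind.comp _ fun _ => (monotone_cdf _).measurable)

end ProbabilityTheory

lemma measure_exists_gt_le_of_forall_gt {Ω ι : Type*} [MeasurableSpace Ω] (μ : Measure Ω)
    (s : Set ι) (W : ι → Ω → ℝ) {t : ℝ} {a : ENNReal}
    (h : ∀ t' > t, μ {ω | ∃ i ∈ s, W i ω > t'} ≤ a) :
    μ {ω | ∃ i ∈ s, W i ω > t} ≤ a := by
  set E : ℕ → Set Ω := fun m => {ω | ∃ i ∈ s, W i ω > t + 1 / (m + 1)}
  have hE : {ω | ∃ i ∈ s, W i ω > t} = ⋃ m, E m := by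
    ext ω
    simp only [mem_ofPred_eq, mem_iUnion, E]
    constructor
    · rintro ⟨i, hi, hgt⟩
      obtain ⟨m, hm⟩ := exists_nat_one_div_lt (sub_pos.mpr hgt)
      exact ⟨m, i, hi, by linarith⟩
    · rintro ⟨m, i, hi, hgt⟩
      exact ⟨i, hi, lt_trans (lt_add_of_pos_right t Nat.one_div_pos_of_nat) hgt⟩
  have hmono : Monotone E := fun m m' hmm' ω ⟨i, hi, hgt⟩ =>
    ⟨i, hi, lt_of_le_of_lt (by gcongr) hgt⟩
  rw [hE, hmono.measure_iUnion]
  exact iSup_le fun m => h _ (lt_add_of_pos_right t Nat.one_div_pos_of_nat)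

lemma measure_exists_gt_sInf_le {Ω ι : Type*} [MeasurableSpace Ω] (μ : Measure Ω)
    (s : Set ι) (W : ι → Ω → ℝ) {a : ENNReal} {C : ℝ} (hC : ∀ i ω, W i ω ≤ C) :
    μ {ω | ∃ i ∈ s, W i ω > sInf {t : ℝ | μ {ω | ∃ i ∈ s, W i ω > t} ≤ a}} ≤ a := by
  have hne : {t : ℝ | μ {ω | ∃ i ∈ s, W i ω > t} ≤ a}.Nonempty := by
    refine ⟨C, ?_⟩
    have hC' : {ω | ∃ i ∈ s, W i ω > C} = ∅ :=
      eq_empty_of_forall_notMem fun ω ⟨i, _, hgt⟩ => (hC i ω).not_gt hgt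
    simp [hC']
  refine measure_exists_gt_le_of_forall_gt μ s W fun t' ht' => ?_
  obtain ⟨t, ht, htt'⟩ := exists_lt_of_csInf_lt hne ht'
  refine (measure_mono ?_).trans ht
  rintro ω ⟨i, hi, hgt⟩
  exact ⟨i, hi, htt'.trans hgt⟩

section WMW

variable {Ω Ω' : Type*} {h τ : ℕ}

lemma wmwStat_le (Z : ℕ → Ω → ℝ) (ω : Ω) : wmwStat h Z τ ω ≤ h * (2 * h) := by
  calc wmwStat h Z τ ω
      ≤ ∑ _i ∈ Finset.Ioc τ (τ + h), ∑ _j ∈ Finset.Ioc (τ - h) (τ + h), (1 : ℝ) :=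
        Finset.sum_le_sum fun _ _ => Finset.sum_le_sum fun _ _ => by split_ifs <;> norm_num
    _ ≤ h * (2 * h) := by
        simp only [Finset.sum_const, Nat.card_Ioc, nsmul_eq_mul, mul_one]
        gcongr <;> norm_cast <;> omega

lemma wmwStat_congr {Z : ℕ → Ω → ℝ} {Z' : ℕ → Ω' → ℝ} {ω : Ω} {ω' : Ω'}
    (hZ : ∀ j ∈ Finset.Ioc (τ - h) (τ + h), Z j ω = Z' j ω') :
    wmwStat h Z τ ω = wmwStat h Z' τ ω' := by
  refine Finset.sum_congr rfl fun i hi => Finset.sum_congr rfl fun j hj => ?_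
  have hi' : i ∈ Finset.Ioc (τ - h) (τ + h) := by simp only [Finset.mem_Ioc] at hi ⊢; omega
  rw [hZ i hi', hZ j hj]

lemma wmwStat_mono {Z Y : ℕ → Ω → ℝ} {ω : Ω}
    (hZY : ∀ i ∈ Finset.Ioc τ (τ + h), ∀ j ∈ Finset.Ioc (τ - h) (τ + h),
      Z j ω ≤ Z i ω → Y j ω ≤ Y i ω) :
    wmwStat h Z τ ω ≤ wmwStat h Y τ ω :=
  Finset.sum_le_sum fun i hi => Finset.sum_le_sum fun j hj => by
    by_cases hle : Z j ω ≤ Z i ω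
    · simp [hle, hZY i hi j hj hle]
    · simp only [hle, if_false]; split_ifs <;> norm_num

lemma wmwStat_comp_strictMono {f : ℝ → ℝ} (hf : StrictMono f) (Z : ℕ → Ω → ℝ) (ω : Ω) :
    wmwStat h (fun j ω => f (Z j ω)) τ ω = wmwStat h Z τ ω := by
  simp only [wmwStat, hf.le_iff_le]

variable [MeasurableSpace Ω]

lemma measurable_wmwStat {Z : ℕ → Ω → ℝ} (hZ : ∀ j, Measurable (Z j)) :
    Measurable (wmwStat h Z τ) :=
  Finset.measurable_sum _ fun _ _ => Finset.measurable_sum _ fun _ _ =>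
    Measurable.ite (measurableSet_le (hZ _) (hZ _)) measurable_const measurable_const

lemma measurableSet_exists_wmwStat_gt {Z : ℕ → Ω → ℝ} (hZ : ∀ j, Measurable (Z j))
    (s : Finset ℕ) (t : ℝ) : MeasurableSet {ω | ∃ τ ∈ s, wmwStat h Z τ ω > t} := by
  have hU : {ω | ∃ τ ∈ s, wmwStat h Z τ ω > t} = ⋃ τ ∈ s, {ω | wmwStat h Z τ ω > t} := by
    ext; simp
  rw [hU]
  exact s.measurableSet_biUnion fun τ _ =>
    measurableSet_lt measurable_const (measurable_wmwStat hZ)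

lemma wmwStat_le_wmwStat_cdf_comp {P : Measure Ω} {Z : ℕ → Ω → ℝ}
    (hlaw : ∀ i ∈ Finset.Ioc (τ - h) (τ + h), ∀ j ∈ Finset.Ioc (τ - h) (τ + h),
      P.map (Z i) = P.map (Z j)) (ω : Ω) :
    wmwStat h Z τ ω ≤ wmwStat h (fun j ω => cdf (P.map (Z j)) (Z j ω)) τ ω := by
  refine wmwStat_mono fun i hi j hj hle => ?_
  have hi' : i ∈ Finset.Ioc (τ - h) (τ + h) := by simp only [Finset.mem_Ioc] at hi ⊢; omega
  simp only [hlaw j hj i hi']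
  exact monotone_cdf _ hle

lemma wmwStat_cdf_comp_eq {P : Measure Ω} {X : ℕ → Ω → ℝ} {ν : Measure ℝ}
    [IsProbabilityMeasure ν] (hν : volume ≪ ν)
    (hlaw : ∀ j ∈ Finset.Ioc (τ - h) (τ + h), P.map (X j) = ν) (ω : Ω) :
    wmwStat h (fun j ω => cdf (P.map (X j)) (X j ω)) τ ω = wmwStat h X τ ω := by
  rw [← wmwStat_comp_strictMono (strictMono_cdf_of_absolutelyContinuous hν) X ω]
  exact wmwStat_congr fun j hj => by rw [hlaw j hj]

end WMW

noncomputable def segmentOf (τstar : ℕ → ℕ) (i : ℕ) : ℕ := sInf {k | i ≤ τstar k}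

section Segments

variable {τstar : ℕ → ℕ} {i j m : ℕ}

lemma lt_of_lt_segmentOf (hm : m < segmentOf τstar i) : τstar m < i :=
  not_le.mp (Nat.notMem_of_lt_sInf (s := {k | i ≤ τstar k}) hm)

lemma segmentOf_spec {K n : ℕ} (hτ0 : τstar 0 = 0) (hτlast : τstar (K + 1) = n)
    (hi1 : 1 ≤ i) (hin : i ≤ n) :
    1 ≤ segmentOf τstar i ∧ segmentOf τstar i ≤ K + 1 ∧
      i ∈ Finset.Ioc (τstar (segmentOf τstar i - 1)) (τstar (segmentOf τstar i)) := by
  have hK : K + 1 ∈ {k | i ≤ τstar k} := by simpa [hτlast] using hin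
  have hmem : i ≤ τstar (segmentOf τstar i) := Nat.sInf_mem ⟨_, hK⟩
  have hpos : 1 ≤ segmentOf τstar i :=
    Nat.one_le_iff_ne_zero.mpr fun h0 => by rw [h0, hτ0] at hmem; omega
  exact ⟨hpos, Nat.sInf_le hK, Finset.mem_Ioc.mpr
    ⟨lt_of_lt_segmentOf (by omega), hmem⟩⟩

lemma segmentOf_eq_of_no_changepoint {K n a b : ℕ} (hτ0 : τstar 0 = 0)
    (hτlast : τstar (K + 1) = n) (hbn : b ≤ n)
    (hnull : ∀ k, 1 ≤ k → k ≤ K → ¬(a < τstar k ∧ τstar k < b))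
    (hi : i ∈ Finset.Ioc a b) (hj : j ∈ Finset.Ioc a b) :
    segmentOf τstar i = segmentOf τstar j := by
  -- the right end of the earlier segment would be a changepoint strictly inside `(a, b)`
  have key : ∀ i ∈ Finset.Ioc a b, ∀ j ∈ Finset.Ioc a b,
      ¬segmentOf τstar i < segmentOf τstar j := by
    intro i hi j hj hlt
    rw [Finset.mem_Ioc] at hi hj
    obtain ⟨hi1, -, hiseg⟩ := segmentOf_spec (i := i) hτ0 hτlast (by omega) (by omega)
    rw [Finset.mem_Ioc] at hiseg
    obtain ⟨-, hjK, -⟩ := segmentOf_spec (i := j) hτ0 hτlast (by omega) (by omega)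
    have := lt_of_lt_segmentOf hlt
    exact hnull _ hi1 (by omega) ⟨by omega, by omega⟩
  exact le_antisymm (not_lt.mp (key j hj i hi)) (not_lt.mp (key i hi j hj))

variable {Ω : Type*} [MeasurableSpace Ω] {P : Measure Ω} {Z : ℕ → Ω → ℝ} {μseg : ℕ → Measure ℝ}

lemma map_eq_segmentOf {K n : ℕ} (hτ0 : τstar 0 = 0) (hτlast : τstar (K + 1) = n)
    (hseglaw : ∀ k, 1 ≤ k → k ≤ K + 1 →
      ∀ i ∈ Finset.Ioc (τstar (k - 1)) (τstar k), P.map (Z i) = μseg k)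
    (hi1 : 1 ≤ i) (hin : i ≤ n) :
    P.map (Z i) = μseg (segmentOf τstar i) :=
  let ⟨hk1, hkK, hmem⟩ := segmentOf_spec hτ0 hτlast hi1 hin
  hseglaw _ hk1 hkK i hmem

lemma nullSingletonClass_map_of_segments {K n : ℕ} (hτ0 : τstar 0 = 0)
    (hτlast : τstar (K + 1) = n)
    (hseglaw : ∀ k, 1 ≤ k → k ≤ K + 1 →
      ∀ i ∈ Finset.Ioc (τstar (k - 1)) (τstar k), P.map (Z i) = μseg k)
    (hatomless : ∀ k, 1 ≤ k → k ≤ K + 1 → ∀ x, μseg k {x} = 0)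
    (hi1 : 1 ≤ i) (hin : i ≤ n) :
    NullSingletonClass (P.map (Z i)) := by
  obtain ⟨hk1, hkK, -⟩ := segmentOf_spec hτ0 hτlast hi1 hin
  rw [map_eq_segmentOf hτ0 hτlast hseglaw hi1 hin]
  exact ⟨hatomless _ hk1 hkK⟩

lemma map_eq_map_of_no_changepoint {K n a b : ℕ} (hτ0 : τstar 0 = 0)
    (hτlast : τstar (K + 1) = n)
    (hseglaw : ∀ k, 1 ≤ k → k ≤ K + 1 →
      ∀ i ∈ Finset.Ioc (τstar (k - 1)) (τstar k), P.map (Z i) = μseg k)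
    (hbn : b ≤ n) (hnull : ∀ k, 1 ≤ k → k ≤ K → ¬(a < τstar k ∧ τstar k < b))
    (hi : i ∈ Finset.Ioc a b) (hj : j ∈ Finset.Ioc a b) :
    P.map (Z i) = P.map (Z j) := by
  have hab := Finset.mem_Ioc.1 hi
  have hab' := Finset.mem_Ioc.1 hj
  rw [map_eq_segmentOf hτ0 hτlast hseglaw (i := i) (by omega) (by omega),
    map_eq_segmentOf hτ0 hτlast hseglaw (i := j) (by omega) (by omega),
    segmentOf_eq_of_no_changepoint hτ0 hτlast hbn hnull hi hj]

end Segments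

-- `x` as the sequence `x₁, …, xₙ`; its values at other indices are junk.
def oneBasedCoord {n : ℕ} (j : ℕ) (x : Fin n → ℝ) : ℝ :=
  if hj : j - 1 < n then x ⟨j - 1, hj⟩ else 0

lemma measurable_oneBasedCoord {n : ℕ} (j : ℕ) : Measurable (oneBasedCoord (n := n) j) := by
  unfold oneBasedCoord
  split_ifs
  · exact measurable_pi_apply _
  · exact measurable_const

lemma measure_exists_wmwStat_gt_eq_of_identDistrib {Ω : Type*} [MeasurableSpace Ω]
    {P : Measure Ω} {n h : ℕ} {X Y : ℕ → Ω → ℝ}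
    (hXY : IdentDistrib (fun ω (i : Fin n) => X (i + 1) ω) (fun ω i => Y (i + 1) ω) P P)
    {s : Finset ℕ} (hs : ∀ τ ∈ s, τ + h ≤ n) (t : ℝ) :
    P {ω | ∃ τ ∈ s, wmwStat h X τ ω > t} = P {ω | ∃ τ ∈ s, wmwStat h Y τ ω > t} := by
  have hpre : ∀ Z : ℕ → Ω → ℝ, {ω | ∃ τ ∈ s, wmwStat h Z τ ω > t} =
      (fun ω (i : Fin n) => Z (i + 1) ω) ⁻¹'
        {x | ∃ τ ∈ s, wmwStat h oneBasedCoord τ x > t} := by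
    intro Z
    ext ω
    refine exists_congr fun τ => and_congr_right fun hτ => ?_
    rw [wmwStat_congr fun j hj => ?_]
    have hj : 1 ≤ j ∧ j ≤ n := by have := hs τ hτ; rw [Finset.mem_Ioc] at hj; omega
    simp only [oneBasedCoord, dif_pos (show j - 1 < n by omega)]
    congr
    omega
  rw [hpre X, hpre Y]
  exact hXY.measure_mem_eq (measurableSet_exists_wmwStat_gt measurable_oneBasedCoord s t)

theorem stmt4_general
    {Ω : Type*} [MeasurableSpace Ω] (P : Measure Ω) [IsProbabilityMeasure P]
    (n h : ℕ)
    (Kstar : ℕ) (τstar : ℕ → ℕ)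
    (hτ0 : τstar 0 = 0) (hτlast : τstar (Kstar + 1) = n)
    (Z : ℕ → Ω → ℝ) (hZmeas : ∀ i, Measurable (Z i))
    (hZindep : iIndepFun (fun i : Fin n => Z (i.val + 1)) P)
    (μseg : ℕ → Measure ℝ)
    (hseglaw : ∀ k : ℕ, 1 ≤ k → k ≤ Kstar + 1 →
      ∀ i ∈ Finset.Ioc (τstar (k - 1)) (τstar k), Measure.map (Z i) P = μseg k)
    (hatomless : ∀ k : ℕ, 1 ≤ k → k ≤ Kstar + 1 → ∀ x : ℝ, μseg k {x} = 0)
    (ξ : ℕ → Ω → ℝ) (hξmeas : ∀ i, Measurable (ξ i))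
    (hξindep : iIndepFun (fun i : Fin n => ξ (i.val + 1)) P)
    (hξlaw : ∀ i ∈ Finset.Icc 1 n, Measure.map (ξ i) P = gaussianReal 0 1)
    (α : ℝ)
    (𝒯 : Ω → Set ℕ)
    -- the universal threshold, simulated from the iid standard normal sample
    (tU : ℝ)
    (htU : tU = sInf {t : ℝ |
      P {ω | ∃ τ ∈ Finset.Icc h (n - h), wmwStat h ξ τ ω > t} ≤ ENNReal.ofReal α}) :
    P {ω | ∃ τ ∈ Finset.Icc h (n - h),
        (∀ k : ℕ, 1 ≤ k → k ≤ Kstar → ¬(τ - h < τstar k ∧ τstar k < τ + h)) ∧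
        τ ∈ 𝒯 ω ∧ wmwStat h Z τ ω > tU}
      ≤ ENNReal.ofReal α := by
  set F := (Finset.Icc h (n - h)).filter
    fun τ => ∀ k : ℕ, 1 ≤ k → k ≤ Kstar → ¬(τ - h < τstar k ∧ τstar k < τ + h)
  have hFn : ∀ τ ∈ F, τ + h ≤ n := fun τ hτ => by
    simp only [F, Finset.mem_filter, Finset.mem_Icc] at hτ; omega
  have hξwindow : ∀ τ ∈ F, ∀ j ∈ Finset.Ioc (τ - h) (τ + h), P.map (ξ j) = gaussianReal 0 1 :=
    fun τ hτ j hj => hξlaw j <| by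
      have := hFn τ hτ
      simp only [Finset.mem_Ioc, Finset.mem_Icc] at hj ⊢
      omega
  have : ∀ i : Fin n, NullSingletonClass (P.map (Z (i + 1))) := fun i =>
    nullSingletonClass_map_of_segments hτ0 hτlast hseglaw hatomless (by omega) i.isLt
  have : ∀ i : Fin n, NullSingletonClass (P.map (ξ (i + 1))) := fun i =>
    ⟨fun x => by
      rw [hξlaw _ (Finset.mem_Icc.2 ⟨by omega, i.isLt⟩)]
      exact gaussianReal_absolutelyContinuous 0 one_ne_zero (measure_singleton x)⟩
  calc _ ≤ P {ω | ∃ τ ∈ F, wmwStat h Z τ ω > tU} := by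
        exact measure_mono fun ω ⟨τ, hτ, hnull, _, hgt⟩ => ⟨τ, Finset.mem_filter.2 ⟨hτ, hnull⟩, hgt⟩
    _ ≤ P {ω | ∃ τ ∈ F, wmwStat h (fun j ω => cdf (P.map (Z j)) (Z j ω)) τ ω > tU} := by
        refine measure_mono fun ω ⟨τ, hτ, hgt⟩ => ⟨τ, hτ, hgt.trans_le ?_⟩
        exact wmwStat_le_wmwStat_cdf_comp (fun i hi j hj => map_eq_map_of_no_changepoint
          hτ0 hτlast hseglaw (hFn τ hτ) (Finset.mem_filter.1 hτ).2 hi hj) ω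
    _ = P {ω | ∃ τ ∈ F, wmwStat h (fun j ω => cdf (P.map (ξ j)) (ξ j ω)) τ ω > tU} :=
        measure_exists_wmwStat_gt_eq_of_identDistrib
          (identDistrib_pi_cdf_comp (fun _ => hZmeas _) (fun _ => hξmeas _) hZindep hξindep) hFn tU
    _ = P {ω | ∃ τ ∈ F, wmwStat h ξ τ ω > tU} := by
        congr 1
        ext ω
        refine exists_congr fun τ => and_congr_right fun hτ => ?_
        rw [wmwStat_cdf_comp_eq (gaussianReal_absolutelyContinuous' 0 one_ne_zero) (hξwindow τ hτ)]
    _ ≤ P {ω | ∃ τ ∈ Finset.Icc h (n - h), wmwStat h ξ τ ω > tU} :=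
        measure_mono fun ω ⟨τ, hτ, hgt⟩ => ⟨τ, (Finset.mem_filter.1 hτ).1, hgt⟩
    _ ≤ ENNReal.ofReal α := by
        rw [htU]
        exact measure_exists_gt_sInf_le P (Finset.Icc h (n - h) : Set ℕ) (wmwStat h ξ)
          fun _ ω => wmwStat_le ξ ω

/-- **Exact FWER control for the rank-based TUNE method (Theorem 4).**
For independent observations that are iid with an atomless distribution within each
segment of a multiple changepoint model, thresholding the windowed Wilcoxon statistics
at the universal threshold `t_{u,α}` — computed from the same statistics evaluated on
iid standard normal variables — controls the FWER at level `α`, for every detection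
output `𝒯` (a random subset of `{1,…,n−1}` with measurable membership events). -/
theorem stmt4
    {Ω : Type*} [MeasurableSpace Ω] (P : Measure Ω) [IsProbabilityMeasure P]
    (n h : ℕ) (hh : 1 ≤ h) (hn : 2 * h ≤ n)
    (Kstar : ℕ) (τstar : ℕ → ℕ)
    (hτ0 : τstar 0 = 0) (hτlast : τstar (Kstar + 1) = n)
    (hτmono : ∀ k ≤ Kstar, τstar k < τstar (k + 1))
    (Z : ℕ → Ω → ℝ) (hZmeas : ∀ i, Measurable (Z i))
    (hZindep : iIndepFun (fun i : Fin n => Z (i.val + 1)) P)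
    (μseg : ℕ → Measure ℝ)
    (hseglaw : ∀ k : ℕ, 1 ≤ k → k ≤ Kstar + 1 →
      ∀ i ∈ Finset.Ioc (τstar (k - 1)) (τstar k), Measure.map (Z i) P = μseg k)
    (hatomless : ∀ k : ℕ, 1 ≤ k → k ≤ Kstar + 1 → ∀ x : ℝ, μseg k {x} = 0)
    (ξ : ℕ → Ω → ℝ) (hξmeas : ∀ i, Measurable (ξ i))
    (hξindep : iIndepFun (fun i : Fin n => ξ (i.val + 1)) P)
    (hξlaw : ∀ i ∈ Finset.Icc 1 n, Measure.map (ξ i) P = gaussianReal 0 1)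
    (α : ℝ) (hα0 : 0 < α) (hα1 : α < 1)
    (𝒯 : Ω → Set ℕ)
    (h𝒯sub : ∀ ω, 𝒯 ω ⊆ Set.Icc 1 (n - 1))
    (h𝒯meas : ∀ τ : ℕ, MeasurableSet {ω | τ ∈ 𝒯 ω})
    -- the universal threshold, simulated from the iid standard normal sample
    (tU : ℝ)
    (htU : tU = sInf {t : ℝ |
      P {ω | ∃ τ ∈ Finset.Icc h (n - h), wmwStat h ξ τ ω > t} ≤ ENNReal.ofReal α}) :
    P {ω | ∃ τ ∈ Finset.Icc h (n - h),
        (∀ k : ℕ, 1 ≤ k → k ≤ Kstar → ¬(τ - h < τstar k ∧ τstar k < τ + h)) ∧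
        τ ∈ 𝒯 ω ∧ wmwStat h Z τ ω > tU}
      ≤ ENNReal.ofReal α :=
  stmt4_general P n h Kstar τstar hτ0 hτlast Z hZmeas hZindep μseg hseglaw hatomless ξ hξmeas
    hξindep hξlaw α 𝒯 tU htU
end

section
/- Let (Ω,𝔉) be a measurable space equipped with two probability measures P and P₀, let n ≥ 2, and for each triple of integers 0 ≤ a < τ < b ≤ n let T_{τ,(a,b]} : Ω → ℝ be measurable. Let 0 = τ*₀ < τ*₁ < ⋯ < τ*_{K*} < τ*_{K*+1} = n be changepoints, and let H̃ = {(a,b] : 0 ≤ a < b ≤ n and the open interval (a,b) contains none of τ*₁,…,τ*_{K*}}. Let K̂ be a random nonnegative integer and 0 = τ̂₀ < τ̂₁ < ⋯ < τ̂_{K̂} < τ̂_{K̂+1} = n random integers, all jointly measurable. Let t ∈ ℝ, α ∈ (0,1), ε₁ ≥ 0, ε₂ ≥ 0, and assume: (i) P₀(max_{0≤a<τ<b≤n} T_{τ,(a,b]} > t) ≤ α + ε₁, and (ii) P(max_{0≤a<τ<b≤n, (a,b]∈H̃} T_{τ,(a,b]} > t) ≤ P₀(max_{0≤a<τ<b≤n,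 (a,b]∈H̃} T_{τ,(a,b]} > t) + ε₂. Then P(there exists j ∈ {1,…,K̂} with (τ̂_{j−1}, τ̂_{j+1}] ∈ H̃ and T_{τ̂_j,(τ̂_{j−1},τ̂_{j+1}]} > t) ≤ α + ε₁ + ε₂. -/
open MeasureTheory ProbabilityTheory Filter

/-- The segment `(a, b]` is a "true null" segment: `0 ≤ a < b ≤ n` and the open interval
`(a, b)` contains none of the true changepoints `τ*₁, …, τ*_{K*}`. -/
def NullSeg (n Kstar : ℕ) (τstar : ℕ → ℕ) (a b : ℕ) : Prop :=
  a < b ∧ b ≤ n ∧ ∀ k : ℕ, 1 ≤ k → k ≤ Kstar → ¬(a < τstar k ∧ τstar k < b)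

/-!
A detected changepoint `τ̂_j` is a split point strictly inside its flanking segment
`(τ̂_{j-1}, τ̂_{j+1}]`, so a significant `τ̂_j` with a true-null flanking segment makes the scan
over all true-null segments exceed `t`. Nullifiability (ii) transfers the probability of that
event to `P₀` at cost `ε₂`, and under `P₀` it is dominated by the scan over all segments,
which threshold selection (i) controls.
-/

theorem NullSeg.right_le {n Kstar : ℕ} {τstar : ℕ → ℕ} {a b : ℕ}
    (h : NullSeg n Kstar τstar a b) : b ≤ n :=
  h.2.1

section Scan

variable {Ω : Type*}

def scanExceeds (S : ℕ → ℕ → Prop) (T : ℕ → ℕ → ℕ → Ω → ℝ) (t : ℝ) : Set Ω :=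
  {ω | ∃ a τ b : ℕ, a < τ ∧ τ < b ∧ S a b ∧ T τ a b ω > t}

theorem scanExceeds_mono {S S' : ℕ → ℕ → Prop} (h : ∀ a b, S a b → S' a b)
    (T : ℕ → ℕ → ℕ → Ω → ℝ) (t : ℝ) : scanExceeds S T t ⊆ scanExceeds S' T t :=
  fun _ ⟨a, τ, b, haτ, hτb, hS, hT⟩ => ⟨a, τ, b, haτ, hτb, h a b hS, hT⟩

theorem neighbors_lt {s : ℕ → ℕ} {K j : ℕ} (hmono : ∀ i ≤ K, s i < s (i + 1))
    (hj : 1 ≤ j) (hjK : j ≤ K) : s (j - 1) < s j ∧ s j < s (j + 1) := by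
  refine ⟨?_, hmono j hjK⟩
  simpa only [Nat.sub_add_cancel hj] using hmono (j - 1) (by omega)

theorem setOf_neighbors_subset_scanExceeds (K : Ω → ℕ) (s : Ω → ℕ → ℕ)
    (hmono : ∀ ω, ∀ i ≤ K ω, s ω i < s ω (i + 1)) (S : ℕ → ℕ → Prop)
    (T : ℕ → ℕ → ℕ → Ω → ℝ) (t : ℝ) :
    {ω | ∃ j : ℕ, 1 ≤ j ∧ j ≤ K ω ∧ S (s ω (j - 1)) (s ω (j + 1)) ∧
        T (s ω j) (s ω (j - 1)) (s ω (j + 1)) ω > t} ⊆ scanExceeds S T t := by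
  rintro ω ⟨j, hj, hjK, hS, hT⟩
  obtain ⟨hleft, hright⟩ := neighbors_lt (hmono ω) hj hjK
  exact ⟨_, _, _, hleft, hright, hS, hT⟩

end Scan

theorem stmt8_general
    {Ω : Type*} [MeasurableSpace Ω] (P P₀ : Measure Ω)
    (n : ℕ)
    (T : ℕ → ℕ → ℕ → Ω → ℝ)  -- `T τ a b` is the statistic for split `τ` of the segment `(a,b]`
    (Kstar : ℕ) (τstar : ℕ → ℕ)
    (Khat : Ω → ℕ) (τhat : Ω → ℕ → ℕ)
    (hτhatmono : ∀ ω, ∀ j ≤ Khat ω, τhat ω j < τhat ω (j + 1))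
    (t α ε₁ ε₂ : ℝ) (hα0 : 0 < α) (hε₁ : 0 ≤ ε₁) (hε₂ : 0 ≤ ε₂)
    -- (i) threshold selection under the global-null measure P₀
    (hthresh : P₀ {ω | ∃ a τ b : ℕ, a < τ ∧ τ < b ∧ b ≤ n ∧ T τ a b ω > t}
      ≤ ENNReal.ofReal (α + ε₁))
    -- (ii) nullifiability
    (hnull :
      P {ω | ∃ a τ b : ℕ, a < τ ∧ τ < b ∧ NullSeg n Kstar τstar a b ∧ T τ a b ω > t}
      ≤ P₀ {ω | ∃ a τ b : ℕ, a < τ ∧ τ < b ∧ NullSeg n Kstar τstar a b ∧ T τ a b ω > t}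
        + ENNReal.ofReal ε₂) :
    P {ω | ∃ j : ℕ, 1 ≤ j ∧ j ≤ Khat ω ∧
        NullSeg n Kstar τstar (τhat ω (j - 1)) (τhat ω (j + 1)) ∧
        T (τhat ω j) (τhat ω (j - 1)) (τhat ω (j + 1)) ω > t}
      ≤ ENNReal.ofReal (α + ε₁ + ε₂) := by
  calc _ ≤ P (scanExceeds (NullSeg n Kstar τstar) T t) :=
        measure_mono (setOf_neighbors_subset_scanExceeds Khat τhat hτhatmono _ T t)
    _ ≤ P₀ (scanExceeds (NullSeg n Kstar τstar) T t) + ENNReal.ofReal ε₂ := hnull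
    _ ≤ P₀ (scanExceeds (fun _ b ↦ b ≤ n) T t) + ENNReal.ofReal ε₂ :=
        add_le_add_left (measure_mono (scanExceeds_mono (fun _ _ h ↦ h.right_le) T t)) _
    _ ≤ ENNReal.ofReal (α + ε₁) + ENNReal.ofReal ε₂ := add_le_add_left hthresh _
    _ = ENNReal.ofReal (α + ε₁ + ε₂) := (ENNReal.ofReal_add (by linarith) hε₂).symm

/-- **FWER control for true nulls defined by neighboring detected changepoints
(non-asymptotic form of Proposition 3).**
Scanning statistics `T τ a b` (for `0 ≤ a < τ < b ≤ n`) are thresholded at `t`; the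
detected changepoints are `τ̂₁ < ⋯ < τ̂_{K̂}` (with `τ̂₀ = 0`, `τ̂_{K̂+1} = n`), all jointly
measurable.  Under the threshold-selection condition (i) and the nullifiability
condition (ii), the probability that some detected `τ̂_j` whose flanking segment
`(τ̂_{j−1}, τ̂_{j+1}]` is a true null is declared significant is at most `α + ε₁ + ε₂`. -/
theorem stmt8
    {Ω : Type*} [MeasurableSpace Ω] (P P₀ : Measure Ω)
    [IsProbabilityMeasure P] [IsProbabilityMeasure P₀]
    (n : ℕ) (hn : 2 ≤ n)
    (T : ℕ → ℕ → ℕ → Ω → ℝ)  -- `T τ a b` is the statistic for split `τ` of the segment `(a,b]`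
    (hTmeas : ∀ a τ b : ℕ, a < τ → τ < b → b ≤ n → Measurable (T τ a b))
    (Kstar : ℕ) (τstar : ℕ → ℕ)
    (hτ0 : τstar 0 = 0) (hτlast : τstar (Kstar + 1) = n)
    (hτmono : ∀ k ≤ Kstar, τstar k < τstar (k + 1))
    (Khat : Ω → ℕ) (τhat : Ω → ℕ → ℕ)
    (hKmeas : Measurable Khat) (hτhatmeas : ∀ j : ℕ, Measurable fun ω => τhat ω j)
    (hτhat0 : ∀ ω, τhat ω 0 = 0)
    (hτhatlast : ∀ ω, τhat ω (Khat ω + 1) = n)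
    (hτhatmono : ∀ ω, ∀ j ≤ Khat ω, τhat ω j < τhat ω (j + 1))
    (t α ε₁ ε₂ : ℝ) (hα0 : 0 < α) (hα1 : α < 1) (hε₁ : 0 ≤ ε₁) (hε₂ : 0 ≤ ε₂)
    -- (i) threshold selection under the global-null measure P₀
    (hthresh : P₀ {ω | ∃ a τ b : ℕ, a < τ ∧ τ < b ∧ b ≤ n ∧ T τ a b ω > t}
      ≤ ENNReal.ofReal (α + ε₁))
    -- (ii) nullifiability
    (hnull :
      P {ω | ∃ a τ b : ℕ, a < τ ∧ τ < b ∧ NullSeg n Kstar τstar a b ∧ T τ a b ω > t}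
      ≤ P₀ {ω | ∃ a τ b : ℕ, a < τ ∧ τ < b ∧ NullSeg n Kstar τstar a b ∧ T τ a b ω > t}
        + ENNReal.ofReal ε₂) :
    P {ω | ∃ j : ℕ, 1 ≤ j ∧ j ≤ Khat ω ∧
        NullSeg n Kstar τstar (τhat ω (j - 1)) (τhat ω (j + 1)) ∧
        T (τhat ω j) (τhat ω (j - 1)) (τhat ω (j + 1)) ω > t}
      ≤ ENNReal.ofReal (α + ε₁ + ε₂) :=
  stmt8_general P P₀ n T Kstar τstar Khat τhat hτhatmono t α ε₁ ε₂ hα0 hε₁ hε₂ hthresh hnull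
end
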